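/- arXiv:2604.16000 — 4 statements merged into one kernel-verified Lean document; each statement's English description precedes it below -/
import Mathlib

section
/- For k > 0, p ≥ 1/2, and u, v > 0, the function E_{k,p}(u,v) = (uv)^(-k) + √(uv)·(u/v)^p is strictly convex on {(u,v) : u > 0, v > 0}, in the sense that its Hessian is positive definite at every point. -/
open Real Matrix

noncomputable def pdu (f : ℝ → ℝ → ℝ) (u v : ℝ) : ℝ := deriv (fun x => f x v) u
noncomputable def pdv (f : ℝ → ℝ → ℝ) (u v : ℝ) : ℝ := deriv (fun y => f u y) v

noncomputable def hess (f : ℝ → ℝ → ℝ) (u v : ℝ) : Matrix (Fin 2) (Fin 2) ℝ :=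
  !![pdu (pdu f) u v, pdv (pdu f) u v;
     pdu (pdv f) u v, pdv (pdv f) u v]

/-!
On the open quadrant `E` is the sum of the monomials `x ^ (-k) * y ^ (-k)` and
`x ^ (p + 1/2) * y ^ (1/2 - p)`. The Hessian of `x ^ a * y ^ b` is `x ^ a * y ^ b` times
`g gᵀ - diag (a / x², b / y²)`, where `g = (a / x, b / y)` is the gradient of its logarithm.
For `a, b < 0` this is positive definite. For `a + b = 1` the monomial is homogeneous of degree
one and the matrix collapses to `-a b w wᵀ` with `w = (1 / x, -1 / y)`, which is positive
semidefinite when `a b ≤ 0`, i.e. here when `p ≥ 1/2`.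
-/

open Set Filter Topology Function

def PartiallyDifferentiableOn (f : ℝ → ℝ → ℝ) (s : Set (ℝ × ℝ)) : Prop :=
  ∀ q ∈ s, DifferentiableAt ℝ (fun x => f x q.2) q.1 ∧
    DifferentiableAt ℝ (fun y => f q.1 y) q.2

def TwicePartiallyDifferentiableOn (f : ℝ → ℝ → ℝ) (s : Set (ℝ × ℝ)) : Prop :=
  PartiallyDifferentiableOn f s ∧ PartiallyDifferentiableOn (pdu f) s ∧
    PartiallyDifferentiableOn (pdv f) s

section Partials

variable {f g : ℝ → ℝ → ℝ} {s : Set (ℝ × ℝ)} {u v : ℝ}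

lemma eventuallyEq_left_of_eqOn (hs : IsOpen s) (hfg : EqOn (uncurry f) (uncurry g) s)
    (hq : (u, v) ∈ s) : (fun x => f x v) =ᶠ[𝓝 u] fun x => g x v :=
  eventually_of_mem ((continuous_id.prodMk continuous_const).continuousAt.preimage_mem_nhds
    (hs.mem_nhds hq)) fun _ hx => hfg hx

lemma eventuallyEq_right_of_eqOn (hs : IsOpen s) (hfg : EqOn (uncurry f) (uncurry g) s)
    (hq : (u, v) ∈ s) : (fun y => f u y) =ᶠ[𝓝 v] fun y => g u y :=
  eventually_of_mem ((continuous_const.prodMk continuous_id).continuousAt.preimage_mem_nhds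
    (hs.mem_nhds hq)) fun _ hy => hfg hy

lemma pdu_congr (hs : IsOpen s) (hfg : EqOn (uncurry f) (uncurry g) s) (hq : (u, v) ∈ s) :
    pdu f u v = pdu g u v :=
  (eventuallyEq_left_of_eqOn hs hfg hq).deriv_eq

lemma pdv_congr (hs : IsOpen s) (hfg : EqOn (uncurry f) (uncurry g) s) (hq : (u, v) ∈ s) :
    pdv f u v = pdv g u v :=
  (eventuallyEq_right_of_eqOn hs hfg hq).deriv_eq

lemma hess_congr (hs : IsOpen s) (hfg : EqOn (uncurry f) (uncurry g) s) (hq : (u, v) ∈ s) :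
    hess f u v = hess g u v := by
  have hu : EqOn (uncurry (pdu f)) (uncurry (pdu g)) s := fun q hq => pdu_congr hs hfg hq
  have hv : EqOn (uncurry (pdv f)) (uncurry (pdv g)) s := fun q hq => pdv_congr hs hfg hq
  rw [hess, hess, pdu_congr hs hu hq, pdv_congr hs hu hq, pdu_congr hs hv hq, pdv_congr hs hv hq]

lemma pdu_const_mul (c : ℝ) : pdu (fun x y => c * f x y) u v = c * pdu f u v := by
  simp only [pdu, deriv_const_mul_field']

lemma pdv_const_mul (c : ℝ) : pdv (fun x y => c * f x y) u v = c * pdv f u v := by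
  simp only [pdv, deriv_const_mul_field']

lemma pdu_add (hf : DifferentiableAt ℝ (fun x => f x v) u)
    (hg : DifferentiableAt ℝ (fun x => g x v) u) : pdu (f + g) u v = pdu f u v + pdu g u v :=
  deriv_add hf hg

lemma pdv_add (hf : DifferentiableAt ℝ (fun y => f u y) v)
    (hg : DifferentiableAt ℝ (fun y => g u y) v) : pdv (f + g) u v = pdv f u v + pdv g u v :=
  deriv_add hf hg

lemma PartiallyDifferentiableOn.congr (hg : PartiallyDifferentiableOn g s) (hs : IsOpen s)
    (hfg : EqOn (uncurry f) (uncurry g) s) : PartiallyDifferentiableOn f s := fun q hq =>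
  ⟨(eventuallyEq_left_of_eqOn hs hfg hq).differentiableAt_iff.2 (hg q hq).1,
    (eventuallyEq_right_of_eqOn hs hfg hq).differentiableAt_iff.2 (hg q hq).2⟩

lemma PartiallyDifferentiableOn.const_mul (hf : PartiallyDifferentiableOn f s) (c : ℝ) :
    PartiallyDifferentiableOn (fun x y => c * f x y) s := fun q hq =>
  ⟨(hf q hq).1.const_mul c, (hf q hq).2.const_mul c⟩

lemma hess_add (hs : IsOpen s) (hf : TwicePartiallyDifferentiableOn f s)
    (hg : TwicePartiallyDifferentiableOn g s) (hq : (u, v) ∈ s) :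
    hess (f + g) u v = hess f u v + hess g u v := by
  obtain ⟨hf, hfu, hfv⟩ := hf
  obtain ⟨hg, hgu, hgv⟩ := hg
  have hu : EqOn (uncurry (pdu (f + g))) (uncurry (pdu f + pdu g)) s := fun q hq =>
    pdu_add (hf q hq).1 (hg q hq).1
  have hv : EqOn (uncurry (pdv (f + g))) (uncurry (pdv f + pdv g)) s := fun q hq =>
    pdv_add (hf q hq).2 (hg q hq).2
  rw [hess, pdu_congr hs hu hq, pdv_congr hs hu hq, pdu_congr hs hv hq, pdv_congr hs hv hq,
    pdu_add (hfu _ hq).1 (hgu _ hq).1, pdv_add (hfu _ hq).2 (hgu _ hq).2,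
    pdu_add (hfv _ hq).1 (hgv _ hq).1, pdv_add (hfv _ hq).2 (hgv _ hq).2]
  ext i j
  fin_cases i <;> fin_cases j <;> rfl

end Partials

noncomputable def rpowMonomial (a b : ℝ) (x y : ℝ) : ℝ := x ^ a * y ^ b

section Monomial

variable (a b : ℝ) {u v : ℝ}

lemma rpowMonomial_pos (hu : 0 < u) (hv : 0 < v) : 0 < rpowMonomial a b u v :=
  mul_pos (rpow_pos_of_pos hu a) (rpow_pos_of_pos hv b)

lemma hasDerivAt_rpowMonomial_left (hu : 0 < u) (v : ℝ) :
    HasDerivAt (fun x => rpowMonomial a b x v) (a * rpowMonomial (a - 1) b u v) u := by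
  simpa [rpowMonomial, mul_assoc] using
    (hasDerivAt_rpow_const (p := a) (Or.inl hu.ne')).mul_const (v ^ b)

lemma hasDerivAt_rpowMonomial_right (u : ℝ) (hv : 0 < v) :
    HasDerivAt (fun y => rpowMonomial a b u y) (b * rpowMonomial a (b - 1) u v) v := by
  simpa [rpowMonomial, mul_left_comm] using
    (hasDerivAt_rpow_const (p := b) (Or.inl hv.ne')).const_mul (u ^ a)

lemma pdu_rpowMonomial (hu : 0 < u) (v : ℝ) :
    pdu (rpowMonomial a b) u v = a * rpowMonomial (a - 1) b u v :=
  (hasDerivAt_rpowMonomial_left a b hu v).deriv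

lemma pdv_rpowMonomial (u : ℝ) (hv : 0 < v) :
    pdv (rpowMonomial a b) u v = b * rpowMonomial a (b - 1) u v :=
  (hasDerivAt_rpowMonomial_right a b u hv).deriv

lemma partiallyDifferentiableOn_rpowMonomial :
    PartiallyDifferentiableOn (rpowMonomial a b) (Ioi 0 ×ˢ Ioi 0) := fun q hq =>
  ⟨(hasDerivAt_rpowMonomial_left a b hq.1 q.2).differentiableAt,
    (hasDerivAt_rpowMonomial_right a b q.1 hq.2).differentiableAt⟩

lemma twicePartiallyDifferentiableOn_rpowMonomial :
    TwicePartiallyDifferentiableOn (rpowMonomial a b) (Ioi 0 ×ˢ Ioi 0) :=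
  ⟨partiallyDifferentiableOn_rpowMonomial a b,
    ((partiallyDifferentiableOn_rpowMonomial (a - 1) b).const_mul a).congr
      (isOpen_Ioi.prod isOpen_Ioi) fun _ hq => pdu_rpowMonomial a b hq.1 _,
    ((partiallyDifferentiableOn_rpowMonomial a (b - 1)).const_mul b).congr
      (isOpen_Ioi.prod isOpen_Ioi) fun _ hq => pdv_rpowMonomial a b _ hq.2⟩

lemma hess_rpowMonomial (hu : 0 < u) (hv : 0 < v) :
    hess (rpowMonomial a b) u v = rpowMonomial a b u v •
      (vecMulVec ![a / u, b / v] ![a / u, b / v] - diagonal ![a / u ^ 2, b / v ^ 2]) := by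
  have hs : IsOpen (Ioi (0 : ℝ) ×ˢ Ioi (0 : ℝ)) := isOpen_Ioi.prod isOpen_Ioi
  have hq : (u, v) ∈ Ioi (0 : ℝ) ×ˢ Ioi (0 : ℝ) := ⟨hu, hv⟩
  have hpdu : EqOn (uncurry (pdu (rpowMonomial a b)))
      (uncurry fun x y => a * rpowMonomial (a - 1) b x y) (Ioi 0 ×ˢ Ioi 0) :=
    fun _ hq => pdu_rpowMonomial a b hq.1 _
  have hpdv : EqOn (uncurry (pdv (rpowMonomial a b)))
      (uncurry fun x y => b * rpowMonomial a (b - 1) x y) (Ioi 0 ×ˢ Ioi 0) :=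
    fun _ hq => pdv_rpowMonomial a b _ hq.2
  rw [hess, pdu_congr hs hpdu hq, pdv_congr hs hpdu hq, pdu_congr hs hpdv hq,
    pdv_congr hs hpdv hq, pdu_const_mul, pdv_const_mul, pdu_const_mul, pdv_const_mul,
    pdu_rpowMonomial _ _ hu, pdv_rpowMonomial _ _ _ hv, pdu_rpowMonomial _ _ hu,
    pdv_rpowMonomial _ _ _ hv]
  ext i j
  fin_cases i <;> fin_cases j <;>
    simp [rpowMonomial, rpow_sub hu, rpow_sub hv, vecMulVec] <;> field_simp

end Monomial

lemma posDef_hess_rpowMonomial {a b u v : ℝ} (ha : a < 0) (hb : b < 0) (hu : 0 < u)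
    (hv : 0 < v) : (hess (rpowMonomial a b) u v).PosDef := by
  rw [hess_rpowMonomial a b hu hv, sub_eq_neg_add, diagonal_neg]
  refine PosDef.smul ?_ (rpowMonomial_pos a b hu hv)
  refine (posDef_diagonal_iff.2 fun i => ?_).add_posSemidef ?_
  · fin_cases i <;> simp <;> exact div_neg_of_neg_of_pos ‹_› (by positivity)
  · simpa using posSemidef_vecMulVec_self_star ![a / u, b / v]

lemma posSemidef_hess_rpowMonomial {a b u v : ℝ} (hab : a + b = 1) (hab' : a * b ≤ 0)
    (hu : 0 < u) (hv : 0 < v) : (hess (rpowMonomial a b) u v).PosSemidef := by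
  have hrank : vecMulVec ![a / u, b / v] ![a / u, b / v] - diagonal ![a / u ^ 2, b / v ^ 2]
      = (-(a * b)) • vecMulVec ![1 / u, -1 / v] ![1 / u, -1 / v] := by
    obtain rfl : b = 1 - a := by linarith
    ext i j
    fin_cases i <;> fin_cases j <;> simp [vecMulVec] <;> field_simp <;> ring
  rw [hess_rpowMonomial a b hu hv, hrank, smul_smul]
  refine PosSemidef.smul ?_ (mul_nonneg (rpowMonomial_pos a b hu hv).le (neg_nonneg.2 hab'))
  simpa using posSemidef_vecMulVec_self_star ![1 / u, -1 / v]

theorem entropy_strictly_convex (k p : ℝ) (hk : 0 < k) (hp : 1 / 2 ≤ p)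
    (E : ℝ → ℝ → ℝ)
    (hE : ∀ u v, E u v = (u * v) ^ (-k) + u ^ (p + 1 / 2) * v ^ (1 / 2 - p)) :
    ∀ u v : ℝ, 0 < u → 0 < v → (hess E u v).PosDef := by
  intro u v hu hv
  have hs : IsOpen (Ioi (0 : ℝ) ×ˢ Ioi (0 : ℝ)) := isOpen_Ioi.prod isOpen_Ioi
  have hEq : EqOn (uncurry E)
      (uncurry (rpowMonomial (-k) (-k) + rpowMonomial (p + 1 / 2) (1 / 2 - p)))
      (Ioi 0 ×ˢ Ioi 0) := fun ⟨x, y⟩ hxy => by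
    simp only [uncurry_apply_pair, Pi.add_apply, hE, rpowMonomial, mul_rpow hxy.1.le hxy.2.le]
  rw [hess_congr hs hEq ⟨hu, hv⟩, hess_add hs (twicePartiallyDifferentiableOn_rpowMonomial _ _)
    (twicePartiallyDifferentiableOn_rpowMonomial _ _) ⟨hu, hv⟩]
  exact (posDef_hess_rpowMonomial (by linarith) (by linarith) hu hv).add_posSemidef
    (posSemidef_hess_rpowMonomial (by ring) (by nlinarith) hu hv)
end

section
/- Suppose Ψ, Θ : (0,∞) → ℝ are C² with Ψ'(r) < 0, Ψ''(r) > 0, 2rΨ''(r) + Ψ'(r) > 0, and 4ξ²Θ''(ξ) + 4ξΘ'(ξ) − Θ(ξ) ≥ 0 for all r, ξ > 0. Then E(u,v) = Ψ(uv) + √(uv)·Θ(u/v) satisfies r₁ᵀ(∇²E)r₁ > 0 and r₂ᵀ(∇²E)r₂ > 0 at every (u,v) with u, v > 0, where r₁ = (-u,v) and r₂ = (u,v). -/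
open Real Matrix

/-!
On the open quadrant `√(uv) Θ(u/v) = v φ(u/v)` with `φ ξ = √ξ Θ ξ`. This perspective of `φ` is
homogeneous of degree one, with Hessian `(φ''(ξ)/v) (1, -ξ)(1, -ξ)ᵀ`: its quadratic form vanishes on
the radial direction `(u, v)` and is `4u²φ''(ξ)/v` on `(-u, v)`, where
`4ξ√ξ φ''(ξ) = 4ξ²Θ''(ξ) + 4ξΘ'(ξ) - Θ(ξ) ≥ 0`. The term `Ψ(uv)` contributes `-2uvΨ'(uv) > 0` on
`(-u, v)` and `2uv(2uvΨ''(uv) + Ψ'(uv)) > 0` on `(u, v)`.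
-/

open Filter Topology Set

theorem hess_eq_of_hasDerivAt {f fu fv : ℝ → ℝ → ℝ} {u v a b c d : ℝ}
    (hfu : ∀ᶠ q in 𝓝 (u, v), HasDerivAt (fun x => f x q.2) (fu q.1 q.2) q.1)
    (hfv : ∀ᶠ q in 𝓝 (u, v), HasDerivAt (fun y => f q.1 y) (fv q.1 q.2) q.2)
    (ha : HasDerivAt (fun x => fu x v) a u) (hb : HasDerivAt (fun y => fu u y) b v)
    (hc : HasDerivAt (fun x => fv x v) c u) (hd : HasDerivAt (fun y => fv u y) d v) :
    hess f u v = !![a, b; c, d] := by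
  have hx : Tendsto (fun x => (x, v)) (𝓝 u) (𝓝 (u, v)) :=
    (continuous_id.prodMk continuous_const).tendsto u
  have hy : Tendsto (fun y => (u, y)) (𝓝 v) (𝓝 (u, v)) :=
    (continuous_const.prodMk continuous_id).tendsto v
  have hu_x : (fun x => pdu f x v) =ᶠ[𝓝 u] fun x => fu x v :=
    (hx.eventually hfu).mono fun _ h => h.deriv
  have hu_y : (fun y => pdu f u y) =ᶠ[𝓝 v] fun y => fu u y :=
    (hy.eventually hfu).mono fun _ h => h.deriv
  have hv_x : (fun x => pdv f x v) =ᶠ[𝓝 u] fun x => fv x v :=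
    (hx.eventually hfv).mono fun _ h => h.deriv
  have hv_y : (fun y => pdv f u y) =ᶠ[𝓝 v] fun y => fv u y :=
    (hy.eventually hfv).mono fun _ h => h.deriv
  show !![deriv (fun x => pdu f x v) u, deriv (fun y => pdu f u y) v;
    deriv (fun x => pdv f x v) u, deriv (fun y => pdv f u y) v] = _
  rw [hu_x.deriv_eq, hu_y.deriv_eq, hv_x.deriv_eq, hv_y.deriv_eq, ha.deriv, hb.deriv, hc.deriv,
    hd.deriv]

theorem hasDerivAt_deriv_of_contDiffOn {f : ℝ → ℝ} {s : Set ℝ} {x : ℝ} {n : WithTop ℕ∞}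
    (hf : ContDiffOn ℝ n f s) (hn : n ≠ 0) (hs : IsOpen s) (hx : x ∈ s) :
    HasDerivAt f (deriv f x) x :=
  ((hf.differentiableOn hn).differentiableAt (hs.mem_nhds hx)).hasDerivAt

theorem hasDerivAt_deriv_deriv_of_contDiffOn {f : ℝ → ℝ} {s : Set ℝ} {x : ℝ}
    (hf : ContDiffOn ℝ 2 f s) (hs : IsOpen s) (hx : x ∈ s) :
    HasDerivAt (deriv f) (deriv (deriv f) x) x :=
  hasDerivAt_deriv_of_contDiffOn (hf.deriv_of_isOpen hs (by norm_num)) one_ne_zero hs hx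

theorem hasDerivAt_const_div (c : ℝ) {y : ℝ} (hy : y ≠ 0) :
    HasDerivAt (fun y => c / y) (-(c / y ^ 2)) y := by
  simpa [div_eq_mul_inv] using (hasDerivAt_inv hy).const_mul c

section MulAddPerspective

variable {Ψ φ : ℝ → ℝ} {E : ℝ → ℝ → ℝ} {x y u v : ℝ}

theorem hasDerivAt_left_of_eq_mul_add_perspective (hΨ : DifferentiableOn ℝ Ψ (Ioi 0))
    (hφ : DifferentiableOn ℝ φ (Ioi 0))
    (hE : ∀ x y, 0 < x → 0 < y → E x y = Ψ (x * y) + y * φ (x / y)) (hx : 0 < x) (hy : 0 < y) :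
    HasDerivAt (fun x => E x y) (y * deriv Ψ (x * y) + deriv φ (x / y)) x := by
  have hE' : (fun x => E x y) =ᶠ[𝓝 x] fun x => Ψ (x * y) + y * φ (x / y) :=
    eventually_of_mem (Ioi_mem_nhds hx) fun x' hx' => hE x' y hx' hy
  have hΨ1 := (hΨ.differentiableAt (Ioi_mem_nhds (mul_pos hx hy))).hasDerivAt
  have hφ1 := (hφ.differentiableAt (Ioi_mem_nhds (div_pos hx hy))).hasDerivAt
  refine ((hΨ1.comp x (hasDerivAt_mul_const y)).add
    ((hφ1.comp x ((hasDerivAt_id' x).div_const y)).const_mul y)).congr_of_eventuallyEq hE'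
    |>.congr_deriv ?_
  field_simp

theorem hasDerivAt_right_of_eq_mul_add_perspective (hΨ : DifferentiableOn ℝ Ψ (Ioi 0))
    (hφ : DifferentiableOn ℝ φ (Ioi 0))
    (hE : ∀ x y, 0 < x → 0 < y → E x y = Ψ (x * y) + y * φ (x / y)) (hx : 0 < x) (hy : 0 < y) :
    HasDerivAt (fun y => E x y) (x * deriv Ψ (x * y) + φ (x / y) - x / y * deriv φ (x / y)) y := by
  have hE' : (fun y => E x y) =ᶠ[𝓝 y] fun y => Ψ (x * y) + y * φ (x / y) :=
    eventually_of_mem (Ioi_mem_nhds hy) fun y' hy' => hE x y' hx hy'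
  have hΨ1 := (hΨ.differentiableAt (Ioi_mem_nhds (mul_pos hx hy))).hasDerivAt
  have hφ1 := (hφ.differentiableAt (Ioi_mem_nhds (div_pos hx hy))).hasDerivAt
  refine ((hΨ1.comp y (hasDerivAt_const_mul x)).add
    ((hasDerivAt_id' y).mul (hφ1.comp y (hasDerivAt_const_div x hy.ne')))).congr_of_eventuallyEq hE'
    |>.congr_deriv ?_
  simp only [Function.comp_def]
  field_simp
  ring

theorem hess_of_eq_mul_add_perspective (hΨ : ContDiffOn ℝ 2 Ψ (Ioi 0))
    (hφ : ContDiffOn ℝ 2 φ (Ioi 0))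
    (hE : ∀ x y, 0 < x → 0 < y → E x y = Ψ (x * y) + y * φ (x / y)) (hu : 0 < u) (hv : 0 < v) :
    hess E u v =
      !![v ^ 2 * deriv (deriv Ψ) (u * v) + deriv (deriv φ) (u / v) / v,
          deriv Ψ (u * v) + u * v * deriv (deriv Ψ) (u * v) - u / v ^ 2 * deriv (deriv φ) (u / v);
        deriv Ψ (u * v) + u * v * deriv (deriv Ψ) (u * v) - u / v ^ 2 * deriv (deriv φ) (u / v),
          u ^ 2 * deriv (deriv Ψ) (u * v) + u ^ 2 / v ^ 3 * deriv (deriv φ) (u / v)] := by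
  have hφ1 := hasDerivAt_deriv_of_contDiffOn hφ two_ne_zero isOpen_Ioi (div_pos hu hv)
  have hΨ2 := hasDerivAt_deriv_deriv_of_contDiffOn hΨ isOpen_Ioi (mul_pos hu hv)
  have hφ2 := hasDerivAt_deriv_deriv_of_contDiffOn hφ isOpen_Ioi (div_pos hu hv)
  have hmul_x := hasDerivAt_mul_const (x := u) v
  have hmul_y := hasDerivAt_const_mul (x := v) u
  have hdiv_x := (hasDerivAt_id' u).div_const v
  have hdiv_y := hasDerivAt_const_div u hv.ne'
  have hquad : ∀ᶠ q in 𝓝 (u, v), 0 < q.1 ∧ 0 < q.2 :=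
    (isOpen_Ioi.prod isOpen_Ioi).mem_nhds ⟨hu, hv⟩
  apply hess_eq_of_hasDerivAt (fu := fun x y => y * deriv Ψ (x * y) + deriv φ (x / y))
    (fv := fun x y => x * deriv Ψ (x * y) + φ (x / y) - x / y * deriv φ (x / y))
  · filter_upwards [hquad] with q hq
    exact hasDerivAt_left_of_eq_mul_add_perspective (hΨ.differentiableOn two_ne_zero)
      (hφ.differentiableOn two_ne_zero) hE hq.1 hq.2
  · filter_upwards [hquad] with q hq
    exact hasDerivAt_right_of_eq_mul_add_perspective (hΨ.differentiableOn two_ne_zero)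
      (hφ.differentiableOn two_ne_zero) hE hq.1 hq.2
  · refine ((hΨ2.comp u hmul_x).const_mul v).add (hφ2.comp u hdiv_x) |>.congr_deriv ?_
    field_simp
  · refine ((hasDerivAt_id' v).mul (hΨ2.comp v hmul_y)).add (hφ2.comp v hdiv_y) |>.congr_deriv ?_
    simp only [Function.comp_def]
    field_simp
    ring
  · refine (((hasDerivAt_id' u).mul (hΨ2.comp u hmul_x)).add (hφ1.comp u hdiv_x)).sub
      (hdiv_x.mul (hφ2.comp u hdiv_x)) |>.congr_deriv ?_
    simp only [Function.comp_def]
    field_simp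
    ring
  · refine (((hΨ2.comp v hmul_y).const_mul u).add (hφ1.comp v hdiv_y)).sub
      (hdiv_y.mul (hφ2.comp v hdiv_y)) |>.congr_deriv ?_
    simp only [Function.comp_def]
    field_simp
    ring

theorem quadForm_hess_along_hyperbola (hΨ : ContDiffOn ℝ 2 Ψ (Ioi 0))
    (hφ : ContDiffOn ℝ 2 φ (Ioi 0))
    (hE : ∀ x y, 0 < x → 0 < y → E x y = Ψ (x * y) + y * φ (x / y)) (hu : 0 < u) (hv : 0 < v) :
    ![-u, v] ⬝ᵥ hess E u v *ᵥ ![-u, v] =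
      -2 * (u * v) * deriv Ψ (u * v) + 4 * u ^ 2 / v * deriv (deriv φ) (u / v) := by
  rw [hess_of_eq_mul_add_perspective hΨ hφ hE hu hv]
  simp only [vec2_dotProduct, mulVec, of_apply, cons_val_zero, cons_val_one, cons_val_fin_one]
  field_simp
  ring

theorem quadForm_hess_along_ray (hΨ : ContDiffOn ℝ 2 Ψ (Ioi 0))
    (hφ : ContDiffOn ℝ 2 φ (Ioi 0))
    (hE : ∀ x y, 0 < x → 0 < y → E x y = Ψ (x * y) + y * φ (x / y)) (hu : 0 < u) (hv : 0 < v) :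
    ![u, v] ⬝ᵥ hess E u v *ᵥ ![u, v] =
      2 * (u * v) * (2 * (u * v) * deriv (deriv Ψ) (u * v) + deriv Ψ (u * v)) := by
  rw [hess_of_eq_mul_add_perspective hΨ hφ hE hu hv]
  simp only [vec2_dotProduct, mulVec, of_apply, cons_val_zero, cons_val_one, cons_val_fin_one]
  field_simp
  ring

end MulAddPerspective

theorem contDiffOn_sqrt_mul {Θ : ℝ → ℝ} {n : WithTop ℕ∞} (hΘ : ContDiffOn ℝ n Θ (Ioi 0)) :
    ContDiffOn ℝ n (fun ξ => √ξ * Θ ξ) (Ioi 0) :=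
  ContDiffOn.mul (fun _ hx => (contDiffAt_sqrt (ne_of_gt hx)).contDiffWithinAt) hΘ

theorem deriv_deriv_sqrt_mul {Θ : ℝ → ℝ} {ξ : ℝ} (hΘ : ContDiffOn ℝ 2 Θ (Ioi 0)) (hξ : 0 < ξ) :
    deriv (deriv fun ξ => √ξ * Θ ξ) ξ =
      (4 * ξ ^ 2 * deriv (deriv Θ) ξ + 4 * ξ * deriv Θ ξ - Θ ξ) / (4 * ξ * √ξ) := by
  have hΘ1 {x : ℝ} (hx : 0 < x) : HasDerivAt Θ (deriv Θ x) x :=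
    hasDerivAt_deriv_of_contDiffOn hΘ two_ne_zero isOpen_Ioi hx
  have hderiv : (deriv fun ξ => √ξ * Θ ξ) =ᶠ[𝓝 ξ] fun x => Θ x / (2 * √x) + √x * deriv Θ x :=
    eventually_of_mem (Ioi_mem_nhds hξ) fun x hx =>
      ((hasDerivAt_sqrt (ne_of_gt hx)).mul (hΘ1 hx)).deriv.trans (by ring)
  have hsqrt : HasDerivAt (fun x => 2 * √x) (2 * (1 / (2 * √ξ))) ξ :=
    (hasDerivAt_sqrt hξ.ne').const_mul 2
  rw [hderiv.deriv_eq]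
  refine (((hΘ1 hξ).div hsqrt (by positivity)).add ((hasDerivAt_sqrt hξ.ne').mul
    (hasDerivAt_deriv_deriv_of_contDiffOn hΘ isOpen_Ioi hξ))).deriv.trans ?_
  have hs : √ξ ^ 2 = ξ := sq_sqrt hξ.le
  have hs0 : 0 < √ξ := sqrt_pos.2 hξ
  field_simp
  rw [hs]
  ring

theorem quadratic_forms_positive_general (Ψ Θ : ℝ → ℝ)
    (hΨ : ContDiffOn ℝ 2 Ψ (Set.Ioi 0))
    (hΘ : ContDiffOn ℝ 2 Θ (Set.Ioi 0))
    (hΨ' : ∀ r : ℝ, 0 < r → deriv Ψ r < 0)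
    (hΨc : ∀ r : ℝ, 0 < r → 0 < 2 * r * deriv (deriv Ψ) r + deriv Ψ r)
    (hΘc : ∀ ξ : ℝ, 0 < ξ →
      0 ≤ 4 * ξ ^ 2 * deriv (deriv Θ) ξ + 4 * ξ * deriv Θ ξ - Θ ξ)
    (E : ℝ → ℝ → ℝ)
    (hE : ∀ u v, E u v = Ψ (u * v) + Real.sqrt (u * v) * Θ (u / v)) :
    ∀ u v : ℝ, 0 < u → 0 < v →
      0 < ![-u, v] ⬝ᵥ (hess E u v).mulVec ![-u, v] ∧
      0 < ![u, v] ⬝ᵥ (hess E u v).mulVec ![u, v] := by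
  intro u v hu hv
  have hE' (x y : ℝ) (hx : 0 < x) (hy : 0 < y) :
      E x y = Ψ (x * y) + y * (fun ξ => √ξ * Θ ξ) (x / y) := by
    have hsqrt : √(x * y) = y * √(x / y) := by
      rw [show x * y = y ^ 2 * (x / y) by field_simp, sqrt_mul (sq_nonneg y), sqrt_sq hy.le]
    rw [hE, hsqrt, mul_assoc]
  have hφ := contDiffOn_sqrt_mul hΘ
  have hr : 0 < u * v := mul_pos hu hv
  have hξ : 0 < u / v := div_pos hu hv
  constructor
  · rw [quadForm_hess_along_hyperbola hΨ hφ hE' hu hv, deriv_deriv_sqrt_mul hΘ hξ]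
    refine add_pos_of_pos_of_nonneg (mul_pos_of_neg_of_neg (by linarith) (hΨ' _ hr)) ?_
    exact mul_nonneg (by positivity) (div_nonneg (hΘc _ hξ) (by positivity))
  · rw [quadForm_hess_along_ray hΨ hφ hE' hu hv]
    exact mul_pos (by positivity) (hΨc _ hr)

theorem quadratic_forms_positive (Ψ Θ : ℝ → ℝ)
    (hΨ : ContDiffOn ℝ 2 Ψ (Set.Ioi 0))
    (hΘ : ContDiffOn ℝ 2 Θ (Set.Ioi 0))
    (hΨ' : ∀ r : ℝ, 0 < r → deriv Ψ r < 0)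
    (hΨ'' : ∀ r : ℝ, 0 < r → 0 < deriv (deriv Ψ) r)
    (hΨc : ∀ r : ℝ, 0 < r → 0 < 2 * r * deriv (deriv Ψ) r + deriv Ψ r)
    (hΘc : ∀ ξ : ℝ, 0 < ξ →
      0 ≤ 4 * ξ ^ 2 * deriv (deriv Θ) ξ + 4 * ξ * deriv Θ ξ - Θ ξ)
    (E : ℝ → ℝ → ℝ)
    (hE : ∀ u v, E u v = Ψ (u * v) + Real.sqrt (u * v) * Θ (u / v)) :
    ∀ u v : ℝ, 0 < u → 0 < v →
      0 < ![-u, v] ⬝ᵥ (hess E u v).mulVec ![-u, v] ∧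
      0 < ![u, v] ⬝ᵥ (hess E u v).mulVec ![u, v] :=
  quadratic_forms_positive_general Ψ Θ hΨ hΘ hΨ' hΨc hΘc E hE
end

section
/- The pair (E, Q) with E(u,v) = Ψ(r) + √r·Θ(ξ) + K and Q(u,v) = ∫_{m²}^{r} Ψ'(s)(φ(s) + 2sφ'(s)) ds + φ(r)·√r·Θ(ξ) (where r = uv, ξ = u/v) satisfies the entropy compatibility condition (∇E)ᵀ·DF = (∇Q)ᵀ, where DF = [[φ(r)+rφ'(r), u²φ'(r)], [v²φ'(r), φ(r)+rφ'(r)]], at every point with u, v > 0. -/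
/-!
The condition `(∇E)ᵀ DF = (∇Q)ᵀ` is linear in `(E, Q)`, so the two summands of `E` can be
treated separately. A function `e(uv)` has gradient `e'(r) (v, u)`, and
`(v, u) DF = (φ + 2rφ') (v, u)`; so `q(uv)` is a flux for it once `q' = e' (φ + 2rφ')`, which the
integral in `Q` provides by the fundamental theorem of calculus. The function
`H = √(uv) Θ(u/v)` is homogeneous of degree one, and Euler's identity `u H_u + v H_v = H` is
exactly what makes `φ(uv) H` a flux for it.
-/

open Real Matrix intervalIntegral

/-- The Jacobian of `F(u, v) = (u φ(uv), v φ(uv))`. -/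
noncomputable def fluxJacobian (φ : ℝ → ℝ) (u v : ℝ) : Matrix (Fin 2) (Fin 2) ℝ :=
  !![φ (u * v) + u * v * deriv φ (u * v), u ^ 2 * deriv φ (u * v);
     v ^ 2 * deriv φ (u * v), φ (u * v) + u * v * deriv φ (u * v)]

section fluxJacobian

variable (φ : ℝ → ℝ) (u v : ℝ)

theorem vecMul_fluxJacobian (a b : ℝ) :
    vecMul ![a, b] (fluxJacobian φ u v) =
      ![a * (φ (u * v) + u * v * deriv φ (u * v)) + b * (v ^ 2 * deriv φ (u * v)),
        a * (u ^ 2 * deriv φ (u * v)) + b * (φ (u * v) + u * v * deriv φ (u * v))] := by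
  ext i
  fin_cases i <;> simp [fluxJacobian, vecMul, dotProduct]

theorem vecMul_fluxJacobian_radial (e' : ℝ) :
    vecMul ![e' * v, e' * u] (fluxJacobian φ u v) =
      ![e' * (φ (u * v) + 2 * (u * v) * deriv φ (u * v)) * v,
        e' * (φ (u * v) + 2 * (u * v) * deriv φ (u * v)) * u] := by
  rw [vecMul_fluxJacobian]
  exact vec2_eq (by ring) (by ring)

theorem vecMul_fluxJacobian_of_euler {a b c : ℝ} (h : u * a + v * b = c) :
    vecMul ![a, b] (fluxJacobian φ u v) =
      ![deriv φ (u * v) * v * c + φ (u * v) * a, deriv φ (u * v) * u * c + φ (u * v) * b] := by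
  rw [vecMul_fluxJacobian, ← h]
  exact vec2_eq (by ring) (by ring)

end fluxJacobian

structure HasPartialDerivsAt (f : ℝ → ℝ → ℝ) (fu fv u v : ℝ) : Prop where
  left : HasDerivAt (fun x => f x v) fu u
  right : HasDerivAt (fun y => f u y) fv v

namespace HasPartialDerivsAt

variable {f g : ℝ → ℝ → ℝ} {fu fv gu gv u v : ℝ}

theorem pdu_eq (h : HasPartialDerivsAt f fu fv u v) : pdu f u v = fu := h.left.deriv

theorem pdv_eq (h : HasPartialDerivsAt f fu fv u v) : pdv f u v = fv := h.right.deriv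

theorem add (hf : HasPartialDerivsAt f fu fv u v) (hg : HasPartialDerivsAt g gu gv u v) :
    HasPartialDerivsAt (fun x y => f x y + g x y) (fu + gu) (fv + gv) u v :=
  ⟨hf.left.add hg.left, hf.right.add hg.right⟩

theorem add_const (hf : HasPartialDerivsAt f fu fv u v) (c : ℝ) :
    HasPartialDerivsAt (fun x y => f x y + c) fu fv u v :=
  ⟨hf.left.add_const c, hf.right.add_const c⟩

theorem mul (hf : HasPartialDerivsAt f fu fv u v) (hg : HasPartialDerivsAt g gu gv u v) :
    HasPartialDerivsAt (fun x y => f x y * g x y)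
      (fu * g u v + f u v * gu) (fv * g u v + f u v * gv) u v :=
  ⟨hf.left.mul hg.left, hf.right.mul hg.right⟩

end HasPartialDerivsAt

theorem hasPartialDerivsAt_comp_mul {g : ℝ → ℝ} {g' u v : ℝ} (hg : HasDerivAt g g' (u * v)) :
    HasPartialDerivsAt (fun x y => g (x * y)) (g' * v) (g' * u) u v :=
  ⟨hg.comp u (hasDerivAt_mul_const v),
    hg.comp v (((hasDerivAt_id' v).const_mul u).congr_deriv (mul_one u))⟩

theorem hasPartialDerivsAt_comp_div {g : ℝ → ℝ} {g' u v : ℝ} (hg : HasDerivAt g g' (u / v))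
    (hv : v ≠ 0) :
    HasPartialDerivsAt (fun x y => g (x / y)) (g' / v) (-(g' * u / v ^ 2)) u v :=
  ⟨(hg.comp u ((hasDerivAt_id' u).div_const v)).congr_deriv (by ring),
    (hg.comp v (((hasDerivAt_id' v).inv hv).const_mul u)).congr_deriv (by ring)⟩

theorem exists_hasPartialDerivsAt_sqrt_mul_comp_div {Θ : ℝ → ℝ} {Θ' u v : ℝ}
    (hΘ : HasDerivAt Θ Θ' (u / v)) (hu : 0 < u) (hv : 0 < v) :
    ∃ a b, HasPartialDerivsAt (fun x y => √(x * y) * Θ (x / y)) a b u v ∧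
      u * a + v * b = √(u * v) * Θ (u / v) := by
  have hr : 0 < u * v := mul_pos hu hv
  refine ⟨_, _, (hasPartialDerivsAt_comp_mul (hasDerivAt_sqrt hr.ne')).mul
    (hasPartialDerivsAt_comp_div hΘ hv.ne'), ?_⟩
  have hs : √(u * v) ≠ 0 := (sqrt_pos.2 hr).ne'
  field_simp
  rw [sq_sqrt hr.le]
  ring

theorem ContinuousOn.integral_hasDerivAt_right {E : Type*} [NormedAddCommGroup E]
    [NormedSpace ℝ E] [CompleteSpace E] {f : ℝ → E} {s : Set ℝ} {a b : ℝ}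
    (hf : ContinuousOn f s) (hs : IsOpen s) (hab : Set.uIcc a b ⊆ s) :
    HasDerivAt (fun t => ∫ x in a..t, f x) (f b) b := by
  have hb : b ∈ s := hab Set.right_mem_uIcc
  exact intervalIntegral.integral_hasDerivAt_right ((hf.mono hab).intervalIntegrable)
    (hf.stronglyMeasurableAtFilter hs b hb) (hf.continuousAt (hs.mem_nhds hb))

theorem entropy_flux_compatibility (φ Ψ Θ : ℝ → ℝ) (K m : ℝ) (hm : 0 < m)
    (hφ : ContDiff ℝ 1 φ)
    (hΨ : ContDiffOn ℝ 1 Ψ (Set.Ioi 0))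
    (hΘ : ContDiffOn ℝ 1 Θ (Set.Ioi 0))
    (E Q : ℝ → ℝ → ℝ)
    (hE : ∀ u v, E u v = Ψ (u * v) + Real.sqrt (u * v) * Θ (u / v) + K)
    (hQ : ∀ u v, Q u v
      = (∫ s in (m ^ 2)..(u * v), deriv Ψ s * (φ s + 2 * s * deriv φ s))
        + φ (u * v) * Real.sqrt (u * v) * Θ (u / v)) :
    ∀ u v : ℝ, 0 < u → 0 < v →
      pdu E u v * (φ (u * v) + (u * v) * deriv φ (u * v))
          + pdv E u v * (v ^ 2 * deriv φ (u * v)) = pdu Q u v ∧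
      pdu E u v * (u ^ 2 * deriv φ (u * v))
          + pdv E u v * (φ (u * v) + (u * v) * deriv φ (u * v)) = pdv Q u v := by
  intro u v hu hv
  have hr : 0 < u * v := mul_pos hu hv
  have hΨr : HasDerivAt Ψ (deriv Ψ (u * v)) (u * v) :=
    (hΨ.differentiableOn one_ne_zero _ hr).differentiableAt (Ioi_mem_nhds hr) |>.hasDerivAt
  have hΘξ : HasDerivAt Θ (deriv Θ (u / v)) (u / v) :=
    (hΘ.differentiableOn one_ne_zero _ (div_pos hu hv)).differentiableAt
      (Ioi_mem_nhds (div_pos hu hv)) |>.hasDerivAt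
  have hintegrand : ContinuousOn (fun s => deriv Ψ s * (φ s + 2 * s * deriv φ s)) (Set.Ioi 0) :=
    (hΨ.continuousOn_deriv_of_isOpen isOpen_Ioi le_rfl).mul
      (hφ.continuous.add (continuous_const.mul continuous_id |>.mul
        (hφ.continuous_deriv le_rfl))).continuousOn
  have hG := hintegrand.integral_hasDerivAt_right isOpen_Ioi
    (Set.ordConnected_Ioi.uIcc_subset (pow_pos hm 2) hr)
  obtain ⟨a, b, hH, hEuler⟩ := exists_hasPartialDerivsAt_sqrt_mul_comp_div hΘξ hu hv
  have hEd := ((hasPartialDerivsAt_comp_mul hΨr).add hH).add_const K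
  have hQd := (hasPartialDerivsAt_comp_mul hG).add
    ((hasPartialDerivsAt_comp_mul ((hφ.differentiable one_ne_zero _).hasDerivAt)).mul hH)
  obtain rfl : E = _ := funext₂ hE
  obtain rfl : Q = _ := funext₂ fun x y => (hQ x y).trans (by rw [mul_assoc])
  have hcompat := congrArg₂ (· + ·) (vecMul_fluxJacobian_radial φ u v (deriv Ψ (u * v)))
    (vecMul_fluxJacobian_of_euler φ u v hEuler)
  rw [← add_vecMul, vec2_add, vec2_add, vecMul_fluxJacobian] at hcompat
  rw [hEd.pdu_eq, hEd.pdv_eq, hQd.pdu_eq, hQd.pdv_eq]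
  exact ⟨congrFun hcompat 0, congrFun hcompat 1⟩
end

section
/- Let u, v be C^{2,1} positive functions solving u_t + (u·φ(uv))_x = ε·((uv)_x / v)_x and v_t + (v·φ(uv))_x = ε·((uv)_x / u)_x. Then r = uv satisfies r_t + (φ(r) + 2r·φ'(r))·r_x = ε·(2·r_xx − (r_x)²/r), and ξ = u/v satisfies ξ_t + (φ(r) − ε·r_x/r)·ξ_x = 0, pointwise. -/
/-!
By the product, quotient and chain rules, every term of the two equations is a rational expression
in `u, v, u_x, v_x, u_t, v_t, r_xx, φ(r), φ'(r)`. Solving the equations for `u_t` and `v_t` and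
substituting into `r_t = u_t v + u v_t` and `ξ_t = (u_t v - u v_t) / v²` leaves two identities of
rational functions. In `u_t v - u v_t` the `φ'(r)` terms cancel and the viscous terms combine to
`ε r_x (u_x v - u v_x) / (u v)`, which is why `ξ` is merely transported.
-/

open Real Set

noncomputable def pdx (f : ℝ → ℝ → ℝ) (x t : ℝ) : ℝ := deriv (fun y => f y t) x
noncomputable def pdt (f : ℝ → ℝ → ℝ) (x t : ℝ) : ℝ := deriv (fun s => f x s) t

section PartialDerivatives

variable {f g : ℝ → ℝ → ℝ} {x t : ℝ}

theorem pdx_mul (hf : DifferentiableAt ℝ (fun y => f y t) x)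
    (hg : DifferentiableAt ℝ (fun y => g y t) x) :
    pdx (fun x t => f x t * g x t) x t = pdx f x t * g x t + f x t * pdx g x t :=
  deriv_mul hf hg

theorem pdx_div (hf : DifferentiableAt ℝ (fun y => f y t) x)
    (hg : DifferentiableAt ℝ (fun y => g y t) x) (hg₀ : g x t ≠ 0) :
    pdx (fun x t => f x t / g x t) x t = (pdx f x t * g x t - f x t * pdx g x t) / g x t ^ 2 :=
  deriv_div hf hg hg₀

theorem pdx_mul_comp {φ : ℝ → ℝ} (hf : DifferentiableAt ℝ (fun y => f y t) x)
    (hg : DifferentiableAt ℝ (fun y => g y t) x) (hφ : DifferentiableAt ℝ φ (g x t)) :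
    pdx (fun x t => f x t * φ (g x t)) x t
      = pdx f x t * φ (g x t) + f x t * (deriv φ (g x t) * pdx g x t) := by
  have hφg : HasDerivAt (fun y => φ (g y t)) (deriv φ (g x t) * pdx g x t) x :=
    hφ.hasDerivAt.comp x hg.hasDerivAt
  exact (hf.hasDerivAt.mul hφg).deriv

theorem pdt_mul (hf : DifferentiableAt ℝ (fun s => f x s) t)
    (hg : DifferentiableAt ℝ (fun s => g x s) t) :
    pdt (fun x t => f x t * g x t) x t = pdt f x t * g x t + f x t * pdt g x t :=
  deriv_mul hf hg

theorem pdt_div (hf : DifferentiableAt ℝ (fun s => f x s) t)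
    (hg : DifferentiableAt ℝ (fun s => g x s) t) (hg₀ : g x t ≠ 0) :
    pdt (fun x t => f x t / g x t) x t = (pdt f x t * g x t - f x t * pdt g x t) / g x t ^ 2 :=
  deriv_div hf hg hg₀

end PartialDerivatives

theorem riemann_invariant_identities {ε u v ux vx ut vt rx rxx f df : ℝ} (hu : u ≠ 0) (hv : v ≠ 0)
    (hrx : rx = ux * v + u * vx)
    (hut : ut + (ux * f + u * (df * rx)) = ε * ((rxx * v - rx * vx) / v ^ 2))
    (hvt : vt + (vx * f + v * (df * rx)) = ε * ((rxx * u - rx * ux) / u ^ 2)) :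
    (ut * v + u * vt + (f + 2 * (u * v) * df) * rx = ε * (2 * rxx - rx ^ 2 / (u * v))) ∧
    ((ut * v - u * vt) / v ^ 2 + (f - ε * rx / (u * v)) * ((ux * v - u * vx) / v ^ 2) = 0) := by
  rw [← eq_sub_iff_add_eq] at hut hvt
  subst hrx hut hvt
  constructor <;> field_simp <;> ring

theorem riemann_invariant_equations_general (ε T : ℝ)
    (φ : ℝ → ℝ) (hφ : ContDiff ℝ 1 φ)
    (u v : ℝ → ℝ → ℝ)
    (hupos : ∀ x t, t ∈ Ioo 0 T → 0 < u x t)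
    (hvpos : ∀ x t, t ∈ Ioo 0 T → 0 < v x t)
    (hux : ∀ t ∈ Ioo 0 T, ContDiff ℝ 2 (fun x => u x t))
    (hvx : ∀ t ∈ Ioo 0 T, ContDiff ℝ 2 (fun x => v x t))
    (hut : ∀ x : ℝ, ContDiffOn ℝ 1 (fun s => u x s) (Ioo 0 T))
    (hvt : ∀ x : ℝ, ContDiffOn ℝ 1 (fun s => v x s) (Ioo 0 T))
    (hpde1 : ∀ x : ℝ, ∀ t ∈ Ioo 0 T,
      pdt u x t + pdx (fun x t => u x t * φ (u x t * v x t)) x t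
        = ε * pdx (fun x t => pdx (fun y s => u y s * v y s) x t / v x t) x t)
    (hpde2 : ∀ x : ℝ, ∀ t ∈ Ioo 0 T,
      pdt v x t + pdx (fun x t => v x t * φ (u x t * v x t)) x t
        = ε * pdx (fun x t => pdx (fun y s => u y s * v y s) x t / u x t) x t)
    (r ξ : ℝ → ℝ → ℝ)
    (hr : ∀ x t, r x t = u x t * v x t)
    (hξ : ∀ x t, ξ x t = u x t / v x t) :
    ∀ x : ℝ, ∀ t ∈ Ioo 0 T,
      (pdt r x t + (φ (r x t) + 2 * r x t * deriv φ (r x t)) * pdx r x t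
        = ε * (2 * pdx (pdx r) x t - (pdx r x t) ^ 2 / r x t)) ∧
      (pdt ξ x t + (φ (r x t) - ε * pdx r x t / r x t) * pdx ξ x t = 0) := by
  obtain rfl : r = fun x t => u x t * v x t := funext₂ hr
  obtain rfl : ξ = fun x t => u x t / v x t := funext₂ hξ
  intro x t ht
  have hu₀ := (hupos x t ht).ne'
  have hv₀ := (hvpos x t ht).ne'
  have hu_x := (hux t ht).differentiable two_ne_zero x
  have hv_x := (hvx t ht).differentiable two_ne_zero x
  have hr_x : DifferentiableAt ℝ (fun y => u y t * v y t) x := hu_x.mul hv_x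
  have hr_xx : DifferentiableAt ℝ (fun y => pdx (fun x t => u x t * v x t) y t) x :=
    ((hux t ht).mul (hvx t ht)).differentiable_deriv_two x
  have hφ' := hφ.differentiable one_ne_zero (u x t * v x t)
  have hu_t := ((hut x).contDiffAt (Ioo_mem_nhds ht.1 ht.2)).differentiableAt one_ne_zero
  have hv_t := ((hvt x).contDiffAt (Ioo_mem_nhds ht.1 ht.2)).differentiableAt one_ne_zero
  have e₁ := hpde1 x t ht
  have e₂ := hpde2 x t ht
  rw [pdx_mul_comp (g := fun x t => u x t * v x t) hu_x hr_x hφ', pdx_div hr_xx hv_x hv₀] at e₁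
  rw [pdx_mul_comp (g := fun x t => u x t * v x t) hv_x hr_x hφ', pdx_div hr_xx hu_x hu₀] at e₂
  rw [pdt_mul hu_t hv_t, pdt_div hu_t hv_t hv₀, pdx_div hu_x hv_x hv₀]
  exact riemann_invariant_identities hu₀ hv₀ (pdx_mul hu_x hv_x) e₁ e₂

theorem riemann_invariant_equations (ε T : ℝ) (hε : 0 < ε) (hT : 0 < T)
    (φ : ℝ → ℝ) (hφ : ContDiff ℝ 1 φ)
    (u v : ℝ → ℝ → ℝ)
    (hupos : ∀ x t, t ∈ Ioo 0 T → 0 < u x t)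
    (hvpos : ∀ x t, t ∈ Ioo 0 T → 0 < v x t)
    (hux : ∀ t ∈ Ioo 0 T, ContDiff ℝ 2 (fun x => u x t))
    (hvx : ∀ t ∈ Ioo 0 T, ContDiff ℝ 2 (fun x => v x t))
    (hut : ∀ x : ℝ, ContDiffOn ℝ 1 (fun s => u x s) (Ioo 0 T))
    (hvt : ∀ x : ℝ, ContDiffOn ℝ 1 (fun s => v x s) (Ioo 0 T))
    (hpde1 : ∀ x : ℝ, ∀ t ∈ Ioo 0 T,
      pdt u x t + pdx (fun x t => u x t * φ (u x t * v x t)) x t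
        = ε * pdx (fun x t => pdx (fun y s => u y s * v y s) x t / v x t) x t)
    (hpde2 : ∀ x : ℝ, ∀ t ∈ Ioo 0 T,
      pdt v x t + pdx (fun x t => v x t * φ (u x t * v x t)) x t
        = ε * pdx (fun x t => pdx (fun y s => u y s * v y s) x t / u x t) x t)
    (r ξ : ℝ → ℝ → ℝ)
    (hr : ∀ x t, r x t = u x t * v x t)
    (hξ : ∀ x t, ξ x t = u x t / v x t) :
    ∀ x : ℝ, ∀ t ∈ Ioo 0 T,
      (pdt r x t + (φ (r x t) + 2 * r x t * deriv φ (r x t)) * pdx r x t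
        = ε * (2 * pdx (pdx r) x t - (pdx r x t) ^ 2 / r x t)) ∧
      (pdt ξ x t + (φ (r x t) - ε * pdx r x t / r x t) * pdx ξ x t = 0) :=
  riemann_invariant_equations_general ε T φ hφ u v hupos hvpos hux hvx hut hvt hpde1 hpde2 r ξ hr hξ
end
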